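/- arXiv:cs/0204031 — 2 statements merged into one kernel-verified Lean document; each statement's English description precedes it below -/
import Mathlib

section
/- Higman's Lemma: Let Σ be a finite alphabet and let A₁, A₂, A₃, … be an infinite sequence of finite strings over Σ. Then there exist indices i and k with i < k such that A_i is a projection of A_k (i.e., A_i can be obtained from A_k by deleting zero or more symbols). -/
/-- Higman's Lemma: for any infinite sequence of finite strings over a
finite alphabet, some earlier string is a projection (subsequence) of a
later one. -/
theorem higman_lemma {σ : Type*} [Finite σ] (A : ℕ → List σ) :
    ∃ i k, i < k ∧ (A i).Sublist (A k) := by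
  have h : (Set.univ : Set σ).PartiallyWellOrderedOn (· = ·) :=
    Set.finite_univ.partiallyWellOrderedOn
  have h2 := h.partiallyWellOrderedOn_sublistForall₂
  obtain ⟨i, k, hik, hsub⟩ := h2 (fun n => ⟨A n, fun x _ => Set.mem_univ x⟩)
  refine ⟨i, k, hik, ?_⟩
  obtain ⟨l, hl, hs⟩ := List.sublistForall₂_iff.1 hsub
  rw [List.forall₂_eq_eq_eq] at hl; rwa [← hl] at hs
end

section
/- Let Σ be a finite alphabet and let A₁, A₂, A₃, … be an infinite sequence of finite strings over Σ. Then there exists an infinite strictly increasing sequence of natural numbers n₁ < n₂ < n₃ < … such that for every i, A_{n_i} is a projection of A_{n_{i+1}} (hence the strings A_{n₁}, A_{n₂}, … form an infinite increasing chain under the projection relation). -/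
/-- From any infinite sequence of finite strings over a finite alphabet one
can extract an infinite strictly increasing sequence of indices along which
the strings form an increasing chain under the projection (subsequence)
relation. -/
theorem higman_chain {σ : Type*} [Finite σ] (A : ℕ → List σ) :
    ∃ n : ℕ → ℕ, StrictMono n ∧ ∀ i, (A (n i)).Sublist (A (n (i + 1))) := by
  have hs : (Set.univ : Set σ).PartiallyWellOrderedOn (· = ·) :=
    Set.Finite.partiallyWellOrderedOn (Set.finite_univ)
  have h := hs.partiallyWellOrderedOn_sublistForall₂ (r := (· = ·))
  haveI : IsPreorder (List σ) (List.SublistForall₂ fun x1 x2 : σ => x1 = x2) := {}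
  obtain ⟨g, hg⟩ := h.exists_monotone_subseq (f := A) (fun n x _ => Set.mem_univ x)
  refine ⟨g, g.strictMono, fun i => ?_⟩
  have := hg i (i + 1) (Nat.le_succ i)
  obtain ⟨l, hl, hsub⟩ := List.sublistForall₂_iff.1 this
  rwa [show A (g i) = l from List.forall₂_eq_eq_eq ▸ hl]
end
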